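/- Let v be a monotone TU-game on N, S ⊆ N with |S| ≥ 2, T ⊆ N∖S, with v(S∪T) > v(T), and let p_S have full support on the 2-partitions of S. Then A^v_p(S,T) = v(T) - v(S∪T) if and only if v(P∪T) = v(S∪T) for every nonempty P ⊆ S (i.e., S is a fully complementary T-contributing coalition). -/

import Mathlib

/-!
Write `w B = v (B ∪ T)`. By monotonicity every part `B ⊆ S` has `w B ≤ w S`, so each
2-partition `{R, S \ R}` contributes at most `2 (w S - v T)` to the weighted sum in the attitude.
The attitude equals `v T - v (S ∪ T)` exactly when this weighted sum attains that bound, and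
since the weights are positive and sum to one, this happens iff every partition attains it,
i.e. iff `w R = w (S \ R) = w S` for every proper nonempty `R ⊆ S`.
-/

open Finset

/-- The set of unordered 2-partitions of `S` into two nonempty disjoint parts. -/
def Pi2 {ι : Type*} [DecidableEq ι] (S : Finset ι) : Finset (Finset (Finset ι)) :=
  (S.powerset.filter fun R => R ≠ ∅ ∧ R ≠ S).image fun R => {R, S \ R}

/-- The attitude of coalition `S` towards `T` under internal distribution `p` on `Pi2 S`. -/
def attitude {ι : Type*} [DecidableEq ι] (v : Finset ι → ℝ) (p : Finset (Finset ι) → ℝ)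
    (S T : Finset ι) : ℝ :=
  v (S ∪ T) - v T - ∑ π ∈ Pi2 S, p π * ((∑ B ∈ π, v (B ∪ T)) - 2 * v T)

theorem weighted_sum_eq_iff_forall_eq_of_le {α K : Type*} [Field K] [LinearOrder K]
    [IsStrictOrderedRing K] {s : Finset α} {w x : α → K} {c : K}
    (hw1 : ∑ i ∈ s, w i = 1) (hwpos : ∀ i ∈ s, 0 < w i) (hxc : ∀ i ∈ s, x i ≤ c) :
    ∑ i ∈ s, w i * x i = c ↔ ∀ i ∈ s, x i = c := by
  have hc : ∑ i ∈ s, w i * c = c := by rw [← sum_mul, hw1, one_mul]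
  conv_lhs => rw [← hc]
  rw [sum_eq_sum_iff_of_le fun i hi => mul_le_mul_of_nonneg_left (hxc i hi) (hwpos i hi).le]
  exact forall₂_congr fun i hi => mul_right_inj' (hwpos i hi).ne'

section Pi2

variable {ι : Type*} [DecidableEq ι] {S : Finset ι}

theorem mem_Pi2 {π : Finset (Finset ι)} :
    π ∈ Pi2 S ↔ ∃ R ⊆ S, R ≠ ∅ ∧ R ≠ S ∧ π = {R, S \ R} := by
  simp only [Pi2, mem_image, mem_filter, mem_powerset, eq_comm (a := π), and_assoc]

theorem sum_pair_sdiff {M : Type*} [AddCommMonoid M] (f : Finset ι → M) {R : Finset ι}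
    (hR : R ≠ ∅) : ∑ B ∈ ({R, S \ R} : Finset (Finset ι)), f B = f R + f (S \ R) := by
  refine sum_pair fun h => hR ?_
  rw [← disjoint_self_iff_empty]
  nth_rw 2 [h]
  exact disjoint_sdiff

variable {w : Finset ι → ℝ}

theorem sum_le_of_mem_Pi2 (hw : ∀ R ⊆ S, w R ≤ w S) {π : Finset (Finset ι)} (hπ : π ∈ Pi2 S) :
    ∑ B ∈ π, w B ≤ 2 * w S := by
  obtain ⟨R, hRS, hR, -, rfl⟩ := mem_Pi2.1 hπ
  rw [sum_pair_sdiff w hR]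
  linarith [hw R hRS, hw (S \ R) sdiff_subset]

theorem forall_Pi2_sum_eq_iff (hw : ∀ R ⊆ S, w R ≤ w S) :
    (∀ π ∈ Pi2 S, ∑ B ∈ π, w B = 2 * w S) ↔ ∀ P ⊆ S, P ≠ ∅ → w P = w S := by
  constructor
  · intro h P hPS hP
    rcases eq_or_ne P S with rfl | hPS'
    · rfl
    have hpair := h _ (mem_Pi2.2 ⟨P, hPS, hP, hPS', rfl⟩)
    rw [sum_pair_sdiff w hP] at hpair
    linarith [hw P hPS, hw (S \ P) sdiff_subset]
  · intro h π hπ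
    obtain ⟨R, hRS, hR, hRS', rfl⟩ := mem_Pi2.1 hπ
    have hSR : S \ R ≠ ∅ := fun he => hRS' (hRS.antisymm (sdiff_eq_empty_iff_subset.1 he))
    rw [sum_pair_sdiff w hR, h R hRS hR, h (S \ R) sdiff_subset hSR, two_mul]

end Pi2

theorem attitude_eq_neg_marginal_iff_fully_complementary_general {ι : Type*} [DecidableEq ι]
    (N S T : Finset ι) (v : Finset ι → ℝ) (p : Finset (Finset ι) → ℝ)
    (hmono : ∀ A B : Finset ι, A ⊆ B → B ⊆ N → v A ≤ v B)
    (hSN : S ⊆ N) (hT : T ⊆ N \ S)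
    (hp1 : ∑ π ∈ Pi2 S, p π = 1) (hppos : ∀ π ∈ Pi2 S, 0 < p π) :
    attitude v p S T = v T - v (S ∪ T) ↔
      ∀ P : Finset ι, P ⊆ S → P ≠ ∅ → v (P ∪ T) = v (S ∪ T) := by
  set w : Finset ι → ℝ := fun B => v (B ∪ T)
  have hw : ∀ R ⊆ S, w R ≤ w S := fun R hR =>
    hmono _ _ (union_subset_union_left hR) (union_subset hSN (hT.trans sdiff_subset))
  have hbound : ∀ π ∈ Pi2 S, ∑ B ∈ π, w B - 2 * v T ≤ 2 * (w S - v T) := fun π hπ => by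
    linarith [sum_le_of_mem_Pi2 hw hπ]
  calc attitude v p S T = v T - v (S ∪ T)
      ↔ ∑ π ∈ Pi2 S, p π * (∑ B ∈ π, w B - 2 * v T) = 2 * (w S - v T) := by
        unfold attitude; constructor <;> intro <;> linarith
    _ ↔ ∀ π ∈ Pi2 S, ∑ B ∈ π, w B - 2 * v T = 2 * (w S - v T) :=
        weighted_sum_eq_iff_forall_eq_of_le hp1 hppos hbound
    _ ↔ ∀ π ∈ Pi2 S, ∑ B ∈ π, w B = 2 * w S :=
        forall₂_congr fun _ _ => by constructor <;> intro <;> linarith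
    _ ↔ _ := forall_Pi2_sum_eq_iff hw

theorem attitude_eq_neg_marginal_iff_fully_complementary {ι : Type*} [DecidableEq ι]
    (N S T : Finset ι) (v : Finset ι → ℝ) (p : Finset (Finset ι) → ℝ)
    (hv0 : v ∅ = 0) (hmono : ∀ A B : Finset ι, A ⊆ B → B ⊆ N → v A ≤ v B)
    (hSN : S ⊆ N) (h2 : 2 ≤ S.card) (hT : T ⊆ N \ S)
    (hcontrib : v T < v (S ∪ T))
    (hp1 : ∑ π ∈ Pi2 S, p π = 1) (hppos : ∀ π ∈ Pi2 S, 0 < p π) :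
    attitude v p S T = v T - v (S ∪ T) ↔
      ∀ P : Finset ι, P ⊆ S → P ≠ ∅ → v (P ∪ T) = v (S ∪ T) :=
  attitude_eq_neg_marginal_iff_fully_complementary_general N S T v p hmono hSN hT hp1 hppos
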